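/- Let x, y, z, w ∈ ℂ with z + w = xy, set μ = x² + y² + z² - xyz (note then also μ = x² + y² + w² - xyw), ν = cosh⁻¹(1 - μ/2), and suppose μ ∉ {0,4} and x², y² ≠ μ. Define Ψ(x,y,z) = log[(xy + (e^ν - 1)z)/((x² - μ)^{1/2}(y² - μ)^{1/2})] for fixed choices of the square roots. Then Ψ(x,y,z) + Ψ(x,y,w) ≡ ν (mod 2πi). -/
import Mathlib


/-- The principal square root of a complex number (nonnegative real part). -/
noncomputable def csqrt (z : ℂ) : ℂ := z ^ ((1 : ℂ) / 2)

/-- The principal inverse hyperbolic cosine, with nonnegative real part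
and imaginary part in (-π, π]. -/
noncomputable def carccosh (z : ℂ) : ℂ :=
  Complex.log (z + csqrt (z - 1) * csqrt (z + 1))

lemma csqrt_sq (z : ℂ) : csqrt z ^ 2 = z := by
  by_cases hz : z = 0
  · simp [csqrt, hz]
  · unfold csqrt
    have h1 := Complex.log_im_le_pi z
    have h2 := Complex.neg_pi_lt_log_im z
    have him : (Complex.log z * (1 / 2)).im = (Complex.log z).im / 2 := by
      simp [Complex.mul_im]
      ring
    rw [← Complex.cpow_natCast, ← Complex.cpow_mul]
    · norm_num
    · rw [him]; nlinarith [Real.pi_pos]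
    · rw [him]; nlinarith [Real.pi_pos]

theorem psi_edge_relation (x y z w μ ν sx sy : ℂ)
    (hzw : z + w = x * y)
    (hμ : μ = x ^ 2 + y ^ 2 + z ^ 2 - x * y * z)
    (hν : ν = carccosh (1 - μ / 2))
    (h0 : μ ≠ 0) (h4 : μ ≠ 4)
    (hx : x ^ 2 ≠ μ) (hy : y ^ 2 ≠ μ)
    (hsx : sx ^ 2 = x ^ 2 - μ) (hsy : sy ^ 2 = y ^ 2 - μ) :
    ∃ k : ℤ,
      Complex.log ((x * y + (Complex.exp ν - 1) * z) / (sx * sy)) +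
        Complex.log ((x * y + (Complex.exp ν - 1) * w) / (sx * sy)) =
      ν + 2 * Real.pi * Complex.I * k := by
  set E := Complex.exp ν with hEdef
  set u : ℂ := 1 - μ / 2 with hu
  set s : ℂ := csqrt (u - 1) * csqrt (u + 1) with hs
  have hs2 : s ^ 2 = u ^ 2 - 1 := by
    rw [hs, mul_pow, csqrt_sq, csqrt_sq]; ring
  have hus : u + s ≠ 0 := by
    intro h
    have : s = -u := by linear_combination h
    rw [this] at hs2
    have : (1 : ℂ) = 0 := by linear_combination hs2
    norm_num at this
  have hE : E = u + s := by
    rw [hEdef, hν, carccosh, ← hs, Complex.exp_log hus]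
  have hEq : E ^ 2 - (2 - μ) * E + 1 = 0 := by
    rw [hE]
    have : (2 : ℂ) - μ = 2 * u := by rw [hu]; ring
    rw [this]
    linear_combination hs2
  have hEne : E ≠ 0 := Complex.exp_ne_zero ν
  have hxne : x ^ 2 - μ ≠ 0 := sub_ne_zero.mpr hx
  have hyne : y ^ 2 - μ ≠ 0 := sub_ne_zero.mpr hy
  have hsxne : sx ≠ 0 := by
    intro h; rw [h] at hsx; simp at hsx; exact hxne hsx.symm
  have hsyne : sy ≠ 0 := by
    intro h; rw [h] at hsy; simp at hsy; exact hyne hsy.symm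
  have hw : w = x * y - z := by linear_combination hzw
  have key : (x * y + (E - 1) * z) * (x * y + (E - 1) * w)
      = E * (x ^ 2 - μ) * (y ^ 2 - μ) := by
    rw [hw]
    linear_combination (x * y * z - z ^ 2) * hEq - μ * E * hμ
  have hab : (x * y + (E - 1) * z) / (sx * sy) *
      ((x * y + (E - 1) * w) / (sx * sy)) = E := by
    field_simp
    linear_combination key - E * (y ^ 2 - μ) * hsx - E * sx ^ 2 * hsy
  have hane : (x * y + (E - 1) * z) / (sx * sy) ≠ 0 := by
    intro h; rw [h, zero_mul] at hab; exact hEne hab.symm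
  have hbne : (x * y + (E - 1) * w) / (sx * sy) ≠ 0 := by
    intro h; rw [h, mul_zero] at hab; exact hEne hab.symm
  have hexp : Complex.exp (Complex.log ((x * y + (E - 1) * z) / (sx * sy)) +
      Complex.log ((x * y + (E - 1) * w) / (sx * sy))) = Complex.exp ν := by
    rw [Complex.exp_add, Complex.exp_log hane, Complex.exp_log hbne, hab]
  rw [Complex.exp_eq_exp_iff_exists_int] at hexp
  obtain ⟨n, hn⟩ := hexp
  exact ⟨n, by rw [hn]; push_cast; ring⟩
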